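/- Let r > 0, let κ = (6−√21)/20 and η = (6+√21)/20, and let a = (a₁, a₂, a₃, a₄) ∈ ℝ⁴. If h_r'(κ; a) = h_r'(η; a) = 0 and h_r(κ; a) = h_r(η; a) = h_r(1; a), then a_j = a_j⁺ for j = 1, 2, 3, 4. -/
import Mathlib


noncomputable section

open Real Filter

/-- Rankin's auxiliary function `h_r(t; a) = t^r − a₁t − a₂t² − a₃t³ − a₄t⁴`,
where `t ^ r` is the real power. -/
def hfun (r a₁ a₂ a₃ a₄ t : ℝ) : ℝ :=
  t ^ r - a₁ * t - a₂ * t ^ 2 - a₃ * t ^ 3 - a₄ * t ^ 4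

/-- The derivative in `t` of `h_r(t; a)`:
`h_r'(t; a) = r·t^{r−1} − a₁ − 2a₂t − 3a₃t² − 4a₄t³`. -/
def hfun' (r a₁ a₂ a₃ a₄ t : ℝ) : ℝ :=
  r * t ^ (r - 1) - a₁ - 2 * a₂ * t - 3 * a₃ * t ^ 2 - 4 * a₄ * t ^ 3

def P1p (r κ η : ℝ) : ℝ :=
  r * κ ^ (r - 1) * η * (κ - 1) * (η - κ) * (κ * η + 2 * κ + η) * (η - 1) ^ 2
    + 2 * (κ ^ r - 1) * κ * η * (η - 1) ^ 2 * (2 * κ * η + 4 * κ - η ^ 2 - 2 * η - 3)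

def P2p (r κ η : ℝ) : ℝ :=
  r * κ ^ (r - 1) * (κ - 1) * (κ - η) * (η - 1) ^ 2 * (2 * κ * η + κ + η ^ 2 + 2 * η)
    + (η ^ r - 1) * (κ - 1) ^ 2 *
      (8 * κ * η ^ 2 + 4 * η ^ 2 - η * κ ^ 2 - 2 * κ * η - 3 * η - κ ^ 3 - 2 * κ ^ 2 - 3 * κ)

def P3p (r κ η : ℝ) : ℝ :=
  r * κ ^ (r - 1) * (κ - 1) * (κ + 2 * η + 1) * (η - κ) * (η - 1) ^ 2
    + 2 * (κ ^ r - 1) * (2 * κ ^ 2 + 2 * κ * η - η ^ 2 - 2 * η - 1) * (η - 1) ^ 2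

def P4p (r κ η : ℝ) : ℝ :=
  r * κ ^ (r - 1) * (κ - 1) * (κ - η) * (η - 1) ^ 2
    + (η ^ r - 1) * (κ - 1) ^ 2 * (3 * η - κ - 2)

/-- `κ₊ = (6 − √21)/20`. -/
def κp : ℝ := (6 - Real.sqrt 21) / 20

/-- `η₊ = (6 + √21)/20`. -/
def ηp : ℝ := (6 + Real.sqrt 21) / 20

def a1p (r : ℝ) : ℝ :=
  (P1p r κp ηp - P1p r ηp κp) / ((κp - 1) ^ 2 * (ηp - 1) ^ 2 * (κp - ηp) ^ 3)

def a2p (r : ℝ) : ℝ :=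
  (P2p r κp ηp - P2p r ηp κp) / ((κp - 1) ^ 2 * (ηp - 1) ^ 2 * (κp - ηp) ^ 3)

def a3p (r : ℝ) : ℝ :=
  (P3p r κp ηp - P3p r ηp κp) / ((κp - 1) ^ 2 * (ηp - 1) ^ 2 * (κp - ηp) ^ 3)

def a4p (r : ℝ) : ℝ :=
  (P4p r κp ηp - P4p r ηp κp) / ((κp - 1) ^ 2 * (ηp - 1) ^ 2 * (κp - ηp) ^ 3)

/-- `a₀⁺ = 1 − a₁⁺ − a₂⁺ − a₃⁺ − a₄⁺`. -/
def a0p (r : ℝ) : ℝ := 1 - a1p r - a2p r - a3p r - a4p r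

/-- If `h_r'(·; a)` vanishes at `κ₊` and `η₊` and `h_r(κ₊; a) = h_r(η₊; a) = h_r(1; a)`,
then the coefficients `a₁, a₂, a₃, a₄` are the Rankin coefficients `a_j⁺`. -/
theorem rankin_coeff_plus (r : ℝ) (hr : 0 < r) (a₁ a₂ a₃ a₄ : ℝ)
    (hd₁ : hfun' r a₁ a₂ a₃ a₄ κp = 0) (hd₂ : hfun' r a₁ a₂ a₃ a₄ ηp = 0)
    (hv₁ : hfun r a₁ a₂ a₃ a₄ κp = hfun r a₁ a₂ a₃ a₄ 1)
    (hv₂ : hfun r a₁ a₂ a₃ a₄ ηp = hfun r a₁ a₂ a₃ a₄ 1) :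
    a₁ = a1p r ∧ a₂ = a2p r ∧ a₃ = a3p r ∧ a₄ = a4p r := by
  have h21 : (0:ℝ) ≤ 21 := by norm_num
  have hs : Real.sqrt 21 < 5 := by
    rw [show (5:ℝ) = Real.sqrt 25 by rw [show (25:ℝ) = 5^2 by norm_num, Real.sqrt_sq]; norm_num]
    exact Real.sqrt_lt_sqrt h21 (by norm_num)
  have hs' : (4:ℝ) < Real.sqrt 21 := by
    rw [show (4:ℝ) = Real.sqrt 16 by rw [show (16:ℝ) = 4^2 by norm_num, Real.sqrt_sq]; norm_num]
    exact Real.sqrt_lt_sqrt (by norm_num) (by norm_num)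
  have hκ0 : (0:ℝ) < κp := by unfold κp; linarith
  have hη0 : (0:ℝ) < ηp := by unfold ηp; linarith
  have hκ1 : κp - 1 ≠ 0 := by unfold κp; intro h; nlinarith
  have hη1 : ηp - 1 ≠ 0 := by unfold ηp; intro h; nlinarith
  have hκη : κp - ηp ≠ 0 := by unfold κp ηp; intro h; nlinarith
  have hD : (κp - 1) ^ 2 * (ηp - 1) ^ 2 * (κp - ηp) ^ 3 ≠ 0 := by positivity
  have hkr : κp ^ r = κp ^ (r-1) * κp := by
    rw [← Real.rpow_add_one hκ0.ne', sub_add_cancel]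
  have hηr : ηp ^ r = ηp ^ (r-1) * ηp := by
    rw [← Real.rpow_add_one hη0.ne', sub_add_cancel]
  simp only [hfun, hfun'] at hd₁ hd₂ hv₁ hv₂
  rw [hkr, Real.one_rpow] at hv₁
  rw [hηr, Real.one_rpow] at hv₂
  refine ⟨?_, ?_, ?_, ?_⟩
  · simp only [a1p, P1p]
    rw [hkr, hηr, eq_div_iff hD]
    linear_combination (ηp ^ 3 + (-2) * ηp ^ 4 + ηp ^ 5 + κp * ηp ^ 2 + (-2) * κp * ηp ^ 3 + κp * ηp ^ 4 + (-2) * κp ^ 2 * ηp + 2 * κp ^ 2 * ηp ^ 2 + κp ^ 2 * ηp ^ 3 + (-1) * κp ^ 2 * ηp ^ 5 + 2 * κp ^ 3 * ηp + (-3) * κp ^ 3 * ηp ^ 2 + κp ^ 3 * ηp ^ 4) * hd₁ + (2 * κp * ηp ^ 2 + (-2) * κp * ηp ^ 3 + (-1) * κp ^ 2 * ηp + (-2) * κp ^ 2 * ηp ^ 2 + 3 * κp ^ 2 * ηp ^ 3 + (-1) * κp ^ 3 + 2 * κp ^ 3 * ηp + (-1) * κp ^ 3 * ηp ^ 2 +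 2 * κp ^ 4 + (-1) * κp ^ 4 * ηp + (-1) * κp ^ 4 * ηp ^ 3 + (-1) * κp ^ 5 + κp ^ 5 * ηp ^ 2) * hd₂ + (6 * κp * ηp + (-8) * κp * ηp ^ 2 + 2 * κp * ηp ^ 5 + (-8) * κp ^ 2 * ηp + 12 * κp ^ 2 * ηp ^ 2 + (-4) * κp ^ 2 * ηp ^ 4) * hv₁ + ((-6) * κp * ηp + 8 * κp * ηp ^ 2 + 8 * κp ^ 2 * ηp + (-12) * κp ^ 2 * ηp ^ 2 + 4 * κp ^ 4 * ηp ^ 2 + (-2) * κp ^ 5 * ηp) * hv₂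
  · simp only [a2p, P2p]
    rw [hkr, hηr, eq_div_iff hD]
    linear_combination ((-2) * ηp ^ 2 + 3 * ηp ^ 3 + (-1) * ηp ^ 5 + κp * ηp + (-1) * κp * ηp ^ 2 + (-1) * κp * ηp ^ 4 + κp * ηp ^ 5 + κp ^ 2 + (-1) * κp ^ 2 * ηp + (-1) * κp ^ 2 * ηp ^ 3 + κp ^ 2 * ηp ^ 4 + (-1) * κp ^ 3 + 3 * κp ^ 3 * ηp ^ 2 + (-2) * κp ^ 3 * ηp ^ 3) * hd₁ + ((-1) * ηp ^ 2 + ηp ^ 3 + (-1) * κp * ηp + κp * ηp ^ 2 + 2 * κp ^ 2 + κp ^ 2 * ηp + (-3) * κp ^ 2 * ηp ^ 3 + (-3) * κp ^ 3 + κp ^ 3 * ηp ^ 2 + 2 * κp ^ 3 * ηp ^ 3 + κp ^ 4 * ηp + (-1) * κp ^ 4 * ηp ^ 2 + κp ^ 5 + (-1) * κp ^ 5 * ηp) * hd₂ + ((-3) * ηp + 4 * ηp ^ 2 + (-1) * ηp ^ 5 + (-3) * κp + 4 * κp * ηp + (-1) * κp * ηp ^ 4 + 4 * κp ^ 2 +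 (-12) * κp ^ 2 * ηp ^ 2 + 8 * κp ^ 2 * ηp ^ 3) * hv₁ + (3 * ηp + (-4) * ηp ^ 2 + 3 * κp + (-4) * κp * ηp + (-4) * κp ^ 2 + 12 * κp ^ 2 * ηp ^ 2 + (-8) * κp ^ 3 * ηp ^ 2 + κp ^ 4 * ηp + κp ^ 5) * hv₂
  · simp only [a3p, P3p]
    rw [hkr, hηr, eq_div_iff hD]
    linear_combination (ηp + (-3) * ηp ^ 3 + 2 * ηp ^ 4 + (-1) * κp + κp * ηp ^ 2 + 2 * κp * ηp ^ 3 + (-2) * κp * ηp ^ 4 + κp ^ 2 * ηp + (-2) * κp ^ 2 * ηp ^ 2 + κp ^ 2 * ηp ^ 3 + κp ^ 3 + (-2) * κp ^ 3 * ηp + κp ^ 3 * ηp ^ 2) * hd₁ + (ηp + (-1) * ηp ^ 3 + (-1) * κp + (-1) * κp * ηp ^ 2 + 2 * κp * ηp ^ 3 + (-1) * κp ^ 2 * ηp + 2 * κp ^ 2 * ηp ^ 2 + (-1) * κp ^ 2 * ηp ^ 3 + 3 * κp ^ 3 + (-2) * κp ^ 3 * ηp + (-1) * κp ^ 3 * ηp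 ^ 2 + (-2) * κp ^ 4 + 2 * κp ^ 4 * ηp) * hd₂ + (2 + (-4) * ηp ^ 2 + 2 * ηp ^ 4 + (-4) * κp * ηp + 8 * κp * ηp ^ 2 + (-4) * κp * ηp ^ 3 + (-4) * κp ^ 2 + 8 * κp ^ 2 * ηp + (-4) * κp ^ 2 * ηp ^ 2) * hv₁ + ((-2) + 4 * ηp ^ 2 + 4 * κp * ηp + (-8) * κp * ηp ^ 2 + 4 * κp ^ 2 + (-8) * κp ^ 2 * ηp + 4 * κp ^ 2 * ηp ^ 2 + 4 * κp ^ 3 * ηp + (-2) * κp ^ 4) * hv₂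
  · simp only [a4p, P4p]
    rw [hkr, hηr, eq_div_iff hD]
    linear_combination ((-1) * ηp + 2 * ηp ^ 2 + (-1) * ηp ^ 3 + κp + (-1) * κp * ηp + (-1) * κp * ηp ^ 2 + κp * ηp ^ 3 + (-1) * κp ^ 2 + 2 * κp ^ 2 * ηp + (-1) * κp ^ 2 * ηp ^ 2) * hd₁ + ((-1) * ηp + ηp ^ 2 + κp + κp * ηp + (-2) * κp * ηp ^ 2 + (-2) * κp ^ 2 + κp ^ 2 * ηp + κp ^ 2 * ηp ^ 2 + κp ^ 3 + (-1) * κp ^ 3 * ηp) * hd₂ + ((-2) + 3 * ηp + (-1) * ηp ^ 3 + 3 * κp + (-6) * κp * ηp + 3 * κp * ηp ^ 2) * hv₁ + (2 + (-3) * ηp + (-3) * κp + 6 * κp * ηp + (-3) * κp ^ 2 * ηp + κp ^ 3) * hv₂
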